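/- arXiv:2103.15130 — 2 statements merged into one kernel-verified Lean document; each statement's English description precedes it below -/
import Mathlib

section
/- Intermediate decomposition for the quantitative Laplace principle: under the same assumptions, for any r̃ ≥ r > 0 with μ(B_r(v*)) > 0, one has ‖v_α(μ) − v*‖ ≤ r̃ + exp(−α (inf_{v ∉ B_{r̃}(v*)} E(v) − E_r)) / μ(B_r(v*)) · ∫‖v − v*‖ dμ(v). -/
/-!
`v_α(μ) - v*` is the average of `v - v*` against the Gibbs weight `w = exp (-α E)`, so its norm
is at most `(∫ w)⁻¹ ∫ w ‖v - v*‖`. Inside `B_r̃(v*)` the factor `‖v - v*‖` is at most `r̃`, which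
contributes `r̃`; outside, the weight is at most `exp (-α inf_{B_r̃ᶜ} E)`. The normalisation is
bounded below by the mass the weight puts on `B_r(v*)`: `∫ w ≥ exp (-α E_r) μ(B_r(v*))`.
-/

open MeasureTheory Metric Real

section WeightedMean

variable {X : Type*} [NormedAddCommGroup X] [MeasurableSpace X]
  {μ : Measure X} {w : X → ℝ}

theorem integral_mul_norm_sub_le {c : X} {R b : ℝ} (hR : 0 ≤ R) (hb : 0 ≤ b) (hw0 : ∀ v, 0 ≤ w v)
    (hwb : ∀ v ∉ closedBall c R, w v ≤ b) (hw : Integrable w μ)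
    (hd : Integrable (fun v => ‖v - c‖) μ) (hwd : Integrable (fun v => w v * ‖v - c‖) μ) :
    ∫ v, w v * ‖v - c‖ ∂μ ≤ R * ∫ v, w v ∂μ + b * ∫ v, ‖v - c‖ ∂μ := by
  rw [← integral_const_mul, ← integral_const_mul,
    ← integral_add (hw.const_mul R) (hd.const_mul b)]
  refine integral_mono hwd ((hw.const_mul R).add (hd.const_mul b)) fun v => ?_
  by_cases hv : v ∈ closedBall c R
  · rw [mem_closedBall, dist_eq_norm] at hv
    nlinarith [hw0 v, norm_nonneg (v - c)]
  · nlinarith [hwb v hv, hw0 v, norm_nonneg (v - c)]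

variable [NormedSpace ℝ X] [CompleteSpace X]

theorem inv_integral_smul_integral_sub_eq (hw : Integrable w μ)
    (hwv : Integrable (fun v => w v • v) μ) (hZ : ∫ v, w v ∂μ ≠ 0) (c : X) :
    (∫ v, w v ∂μ)⁻¹ • (∫ v, w v • v ∂μ) - c = (∫ v, w v ∂μ)⁻¹ • ∫ v, w v • (v - c) ∂μ := by
  simp_rw [smul_sub]
  rw [integral_sub hwv (hw.smul_const c), integral_smul_const, smul_sub, smul_smul,
    inv_mul_cancel₀ hZ, one_smul]

theorem norm_inv_integral_smul_integral_sub_le (hw0 : ∀ v, 0 ≤ w v) (hw : Integrable w μ)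
    (hwv : Integrable (fun v => w v • v) μ) (hZ : ∫ v, w v ∂μ ≠ 0) (c : X) :
    ‖(∫ v, w v ∂μ)⁻¹ • (∫ v, w v • v ∂μ) - c‖
      ≤ (∫ v, w v ∂μ)⁻¹ * ∫ v, w v * ‖v - c‖ ∂μ := by
  rw [inv_integral_smul_integral_sub_eq hw hwv hZ, norm_smul, norm_inv,
    Real.norm_of_nonneg (integral_nonneg hw0)]
  refine mul_le_mul_of_nonneg_left ?_ (inv_nonneg.2 (integral_nonneg hw0))
  refine (norm_integral_le_integral_norm _).trans_eq (integral_congr_ae (ae_of_all _ fun v => ?_))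
  simp only [norm_smul, Real.norm_of_nonneg (hw0 v)]

theorem norm_inv_integral_smul_integral_sub_le_add {c : X} {R a b : ℝ} (hR : 0 ≤ R) (ha : 0 < a)
    (hb : 0 ≤ b) (hw0 : ∀ v, 0 ≤ w v) (hwb : ∀ v ∉ closedBall c R, w v ≤ b)
    (haw : a ≤ ∫ v, w v ∂μ) (hw : Integrable w μ) (hwv : Integrable (fun v => w v • v) μ)
    (hd : Integrable (fun v => ‖v - c‖) μ) (hwd : Integrable (fun v => w v * ‖v - c‖) μ) :
    ‖(∫ v, w v ∂μ)⁻¹ • (∫ v, w v • v ∂μ) - c‖ ≤ R + b / a * ∫ v, ‖v - c‖ ∂μ := by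
  have hZ : 0 < ∫ v, w v ∂μ := ha.trans_le haw
  calc _ ≤ (∫ v, w v ∂μ)⁻¹ * ∫ v, w v * ‖v - c‖ ∂μ :=
        norm_inv_integral_smul_integral_sub_le hw0 hw hwv hZ.ne' c
    _ ≤ (∫ v, w v ∂μ)⁻¹ * (R * ∫ v, w v ∂μ + b * ∫ v, ‖v - c‖ ∂μ) := by
        gcongr
        exact integral_mul_norm_sub_le hR hb hw0 hwb hw hd hwd
    _ = R + b / (∫ v, w v ∂μ) * ∫ v, ‖v - c‖ ∂μ := by field_simp
    _ ≤ R + b / a * ∫ v, ‖v - c‖ ∂μ := by gcongr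

end WeightedMean

section GibbsWeight

variable {X : Type*} {E : X → ℝ} {α : ℝ}

theorem exp_neg_mul_le_exp_neg_mul_sInf {s : Set X} {v : X} (hEs : BddBelow (E '' s))
    (hα : 0 ≤ α) (hv : v ∈ s) : exp (-α * E v) ≤ exp (-α * sInf (E '' s)) :=
  exp_le_exp.2 <| mul_le_mul_of_nonpos_left (csInf_le hEs (Set.mem_image_of_mem E hv))
    (neg_nonpos.2 hα)

theorem exp_neg_mul_sSup_le_exp_neg_mul {s : Set X} {v : X} (hEs : BddAbove (E '' s))
    (hα : 0 ≤ α) (hv : v ∈ s) : exp (-α * sSup (E '' s)) ≤ exp (-α * E v) :=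
  exp_le_exp.2 <| mul_le_mul_of_nonpos_left (le_csSup hEs (Set.mem_image_of_mem E hv))
    (neg_nonpos.2 hα)

variable [MeasurableSpace X] {μ : Measure X}

theorem exp_neg_mul_sSup_mul_measureReal_le_integral [IsFiniteMeasure μ] {s : Set X}
    (hs : MeasurableSet s) (hEs : BddAbove (E '' s)) (hα : 0 ≤ α)
    (hint : Integrable (fun v => exp (-α * E v)) μ) :
    exp (-α * sSup (E '' s)) * μ.real s ≤ ∫ v, exp (-α * E v) ∂μ :=
  (setIntegral_ge_of_const_le_real hs (measure_ne_top μ s)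
    (fun _ hv => exp_neg_mul_sSup_le_exp_neg_mul hEs hα hv) hint.integrableOn).trans
    (setIntegral_le_integral hint (ae_of_all _ fun _ => (exp_pos _).le))

variable [TopologicalSpace X] [OpensMeasurableSpace X]

theorem MeasureTheory.Integrable.exp_neg_mul_smul {F : Type*} [NormedAddCommGroup F]
    [NormedSpace ℝ F] {f : X → F} (hf : Integrable f μ) (hE : Continuous E)
    (hE0 : ∀ v, 0 ≤ E v) (hα : 0 ≤ α) :
    Integrable (fun v => exp (-α * E v) • f v) μ :=
  hf.bdd_smul 1 (by fun_prop) <| ae_of_all _ fun v => by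
    rw [Real.norm_of_nonneg (exp_pos _).le, exp_le_one_iff]
    exact mul_nonpos_of_nonpos_of_nonneg (neg_nonpos.2 hα) (hE0 v)

theorem integrable_exp_neg_mul [IsFiniteMeasure μ] (hE : Continuous E) (hE0 : ∀ v, 0 ≤ E v)
    (hα : 0 ≤ α) : Integrable (fun v => exp (-α * E v)) μ := by
  simpa using (integrable_const (1 : ℝ)).exp_neg_mul_smul (μ := μ) hE hE0 hα

end GibbsWeight

theorem stmt_4_general (d : ℕ) (E : EuclideanSpace ℝ (Fin d) → ℝ)
    (vstar : EuclideanSpace ℝ (Fin d))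
    (hE : Continuous E) (hEnonneg : ∀ v, 0 ≤ E v)
    (μ : Measure (EuclideanSpace ℝ (Fin d))) [IsProbabilityMeasure μ]
    (hmom : Integrable (fun v => ‖v‖) μ)
    (α : ℝ) (hα : 0 < α)
    (r rt : ℝ) (hrt : r ≤ rt)
    (hmass : 0 < (μ (Metric.closedBall vstar r)).toReal) :
    ‖(∫ v, Real.exp (-α * E v) ∂μ)⁻¹ • (∫ v, Real.exp (-α * E v) • v ∂μ) - vstar‖
      ≤ rt + Real.exp (-α * (sInf (E '' (Metric.closedBall vstar rt)ᶜ)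
                - sSup (E '' Metric.closedBall vstar r)))
              / (μ (Metric.closedBall vstar r)).toReal
            * ∫ v, ‖v - vstar‖ ∂μ := by
  have hr : 0 ≤ r := nonempty_closedBall.1 <|
    nonempty_of_measure_ne_zero (ENNReal.toReal_pos_iff.1 hmass).1.ne'
  have hEr : BddAbove (E '' closedBall vstar r) :=
    (isCompact_closedBall vstar r).bddAbove_image hE.continuousOn
  have hErt : BddBelow (E '' (closedBall vstar rt)ᶜ) :=
    ⟨0, Set.forall_mem_image.2 fun v _ => hEnonneg v⟩
  have hv : Integrable (fun v => v) μ := (integrable_norm_iff aestronglyMeasurable_id).1 hmom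
  have hd : Integrable (fun v => ‖v - vstar‖) μ := (hv.sub (integrable_const vstar)).norm
  have hw := integrable_exp_neg_mul (μ := μ) hE hEnonneg hα.le
  calc _ ≤ rt + exp (-α * sInf (E '' (closedBall vstar rt)ᶜ))
          / (exp (-α * sSup (E '' closedBall vstar r)) * μ.real (closedBall vstar r))
          * ∫ v, ‖v - vstar‖ ∂μ :=
        norm_inv_integral_smul_integral_sub_le_add (hr.trans hrt) (mul_pos (exp_pos _) hmass)
          (exp_pos _).le (fun _ => (exp_pos _).le)
          (fun _ hout => exp_neg_mul_le_exp_neg_mul_sInf hErt hα.le hout)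
          (exp_neg_mul_sSup_mul_measureReal_le_integral isClosed_closedBall.measurableSet hEr
            hα.le hw)
          hw (hv.exp_neg_mul_smul hE hEnonneg hα.le) hd (hd.exp_neg_mul_smul hE hEnonneg hα.le)
    _ = _ := by rw [← div_div, ← exp_sub, measureReal_def]; ring_nf

/-- Intermediate decomposition for the quantitative Laplace principle. -/
theorem stmt_4 (d : ℕ) (E : EuclideanSpace ℝ (Fin d) → ℝ)
    (vstar : EuclideanSpace ℝ (Fin d))
    (hE : Continuous E) (hEnonneg : ∀ v, 0 ≤ E v)
    (μ : Measure (EuclideanSpace ℝ (Fin d))) [IsProbabilityMeasure μ]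
    (hmom : Integrable (fun v => ‖v‖) μ)
    (α : ℝ) (hα : 0 < α)
    (hint1 : Integrable (fun v => Real.exp (-α * E v)) μ)
    (hint2 : Integrable (fun v => Real.exp (-α * E v) • v) μ)
    (r rt : ℝ) (hrpos : 0 < r) (hrt : r ≤ rt)
    (hmass : 0 < (μ (Metric.closedBall vstar r)).toReal) :
    ‖(∫ v, Real.exp (-α * E v) ∂μ)⁻¹ • (∫ v, Real.exp (-α * E v) • v ∂μ) - vstar‖
      ≤ rt + Real.exp (-α * (sInf (E '' (Metric.closedBall vstar rt)ᶜ)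
                - sSup (E '' Metric.closedBall vstar r)))
              / (μ (Metric.closedBall vstar r)).toReal
            * ∫ v, ‖v - vstar‖ ∂μ :=
  stmt_4_general d E vstar hE hEnonneg μ hmom α hα r rt hrt hmass
end

section
/- Nonnegativity of the mollifier Laplacian in the outer annulus: let c ∈ (1/2, 1) satisfy (2c − 1)c ≥ d(1 − c)², and let v satisfy √c·r ≤ ‖v − v*‖ < r. Then 2(2‖v − v*‖² − r²)‖v − v*‖² − d(r² − ‖v − v*‖²)² ≥ 0, and hence Δφ_r(v) ≥ 0. -/
/-- Nonnegativity of the mollifier Laplacian in the outer annulus. -/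
theorem stmt_11 (d : ℕ) (r c : ℝ) (hr : 0 < r) (vstar : EuclideanSpace ℝ (Fin d))
    (hc : c ∈ Set.Ioo (1 / 2 : ℝ) 1) (hcd : d * (1 - c) ^ 2 ≤ (2 * c - 1) * c)
    (v : EuclideanSpace ℝ (Fin d))
    (hlo : Real.sqrt c * r ≤ ‖v - vstar‖) (hhi : ‖v - vstar‖ < r) :
    0 ≤ 2 * (2 * ‖v - vstar‖ ^ 2 - r ^ 2) * ‖v - vstar‖ ^ 2
        - d * (r ^ 2 - ‖v - vstar‖ ^ 2) ^ 2 ∧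
    0 ≤ 2 * r ^ 2 *
          ((2 * (2 * ‖v - vstar‖ ^ 2 - r ^ 2) * ‖v - vstar‖ ^ 2
              - d * (r ^ 2 - ‖v - vstar‖ ^ 2) ^ 2)
            / (r ^ 2 - ‖v - vstar‖ ^ 2) ^ 4) *
          Real.exp (1 - r ^ 2 / (r ^ 2 - ‖v - vstar‖ ^ 2)) := by
  obtain ⟨hc1, hc2⟩ := hc
  set s := ‖v - vstar‖ with hs
  have hs0 : 0 ≤ s := norm_nonneg _
  have hc0 : (0:ℝ) ≤ c := by linarith
  have hsq : c * r ^ 2 ≤ s ^ 2 := by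
    have h := mul_le_mul hlo hlo (by positivity) hs0
    calc c * r ^ 2 = (Real.sqrt c * r) * (Real.sqrt c * r) := by
          rw [show Real.sqrt c * r * (Real.sqrt c * r) = Real.sqrt c * Real.sqrt c * r ^ 2 by ring, Real.mul_self_sqrt hc0]
      _ ≤ s * s := h
      _ = s ^ 2 := (sq s).symm
  have hd : (d : ℝ) * (1 - c) ^ 2 ≤ (2 * c - 1) * c := hcd
  have hs2 : s ^ 2 < r ^ 2 := by nlinarith
  have dnn : (0:ℝ) ≤ (d:ℝ) := Nat.cast_nonneg d
  have hB : 0 < r ^ 2 - s ^ 2 := by linarith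
  have hBc : r ^ 2 - s ^ 2 ≤ (1 - c) * r ^ 2 := by nlinarith
  have h1 : (d:ℝ) * (r ^ 2 - s ^ 2) ^ 2 ≤ (d:ℝ) * (1 - c) ^ 2 * r ^ 4 := by
    nlinarith [mul_le_mul hBc hBc hB.le (by nlinarith : (0:ℝ) ≤ (1 - c) * r ^ 2)]
  have h2 : (d:ℝ) * (1 - c) ^ 2 * r ^ 4 ≤ (2 * c - 1) * c * r ^ 4 := by
    nlinarith [pow_pos hr 4]
  have h3 : 2 * ((2 * c - 1) * c * r ^ 4) ≤ 2 * (2 * s ^ 2 - r ^ 2) * s ^ 2 := by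
    have ha : (2 * c - 1) * r ^ 2 ≤ 2 * s ^ 2 - r ^ 2 := by nlinarith
    have hb : (0:ℝ) ≤ (2 * c - 1) * r ^ 2 := by nlinarith
    have h := mul_le_mul ha hsq (by positivity) (le_trans hb ha)
    nlinarith [h]
  have hpos : (0:ℝ) ≤ (2 * c - 1) * c * r ^ 4 := by
    have : (0:ℝ) < r ^ 4 := pow_pos hr 4
    nlinarith
  have key : 0 ≤ 2 * (2 * s ^ 2 - r ^ 2) * s ^ 2 - d * (r ^ 2 - s ^ 2) ^ 2 := by
    linarith
  refine ⟨key, ?_⟩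
  have h4 : (0:ℝ) < (r ^ 2 - s ^ 2) ^ 4 := by positivity
  have he := Real.exp_pos (1 - r ^ 2 / (r ^ 2 - s ^ 2))
  have h1 : (0:ℝ) ≤ 2 * r ^ 2 := by positivity
  exact mul_nonneg (mul_nonneg h1 (div_nonneg key h4.le)) he.le
end
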